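/- arXiv:1804.00211 — 4 statements merged into one kernel-verified Lean document; each statement's English description precedes it below -/
import Mathlib

section
/- Let n ≥ 2 and 1 ≤ k < n, and let Φ be the conditional sequential-counter AtMostK encoding of y → (x_1 + ⋯ + x_n ≤ k), consisting of: (¬x_1 ∨ s_{1,1}); for 1 < j ≤ k the clause (¬y ∨ ¬s_{1,j}); for 1 < i < n the clauses (¬x_i ∨ s_{i,1}) and (¬s_{i−1,1} ∨ s_{i,1}); for 1 < i < n and 1 < j ≤ k the clauses (¬x_i ∨ ¬s_{i−1,j−1} ∨ s_{i,j}) and (¬s_{i−1,j} ∨ s_{i,j}); and for 1 < i ≤ n the clause (¬y ∨ ¬x_i ∨ ¬s_{i−1,k}). Then assigning y to true and any k distinct variables among x_1, …, x_n to true makes unit propagation derive ¬x_j from the restricted formula for every remaining index j. -/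
/-!
Let `x_i` be true exactly for `i ∈ T` and read the counter variable `s_{i,ℓ}` as "at least
`ℓ` of `x_1, …, x_i` are true". Unit propagation from `y` and these `x_i` gives every counter
variable its value in this model: the true ones from left to right, the false ones from right
to left, starting from the clause `(¬y ∨ ¬x_i ∨ ¬s_{i-1,k})` at the `k`-th true `x_i`. Since the
assignment is consistent, the successive restrictions compose into a single one, and propagating
the literals in order of a suitable rank turns each of them, and finally `¬x_j`, into a unit
clause.
-/

abbrev Lit (V : Type) := V × Bool
abbrev Clause (V : Type) := Finset (Lit V)
abbrev CnfForm (V : Type) := Finset (Clause V)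

variable {V : Type} [DecidableEq V]

/-- Restriction Φ|_ρ : remove clauses containing a literal of ρ, and delete from the
remaining clauses every literal whose complement is in ρ. -/
def restrict (Φ : CnfForm V) (ρ : Finset (Lit V)) : CnfForm V :=
  (Φ.filter fun c => ∀ l ∈ ρ, l ∉ c).image fun c => c.filter fun l => (l.1, !l.2) ∉ ρ

/-- Unit propagation derives the literal `l` from `Φ` : repeatedly assigning the
literals of unit clauses true and simplifying eventually produces the unit clause
`{l}` or the empty clause. -/
inductive UPDerives : CnfForm V → Lit V → Prop
  | unit {Φ : CnfForm V} {l : Lit V} : ({l} : Clause V) ∈ Φ → UPDerives Φ l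
  | bot {Φ : CnfForm V} {l : Lit V} : (∅ : Clause V) ∈ Φ → UPDerives Φ l
  | step {Φ : CnfForm V} {l : Lit V} (m : Lit V) : ({m} : Clause V) ∈ Φ →
      UPDerives (restrict Φ {m}) l → UPDerives Φ l

/-- Unit propagation derives the empty clause from `Φ`, i.e. `Φ* = ⊥`. -/
inductive UPEmpty : CnfForm V → Prop
  | bot {Φ : CnfForm V} : (∅ : Clause V) ∈ Φ → UPEmpty Φ
  | step {Φ : CnfForm V} (m : Lit V) : ({m} : Clause V) ∈ Φ → UPEmpty (restrict Φ {m}) → UPEmpty Φ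

/-- `UPReach Φ Ψ` : the formula `Ψ` is obtained from `Φ` by a sequence of
unit-propagation steps. -/
inductive UPReach : CnfForm V → CnfForm V → Prop
  | refl (Φ : CnfForm V) : UPReach Φ Φ
  | step {Φ Ψ : CnfForm V} (m : Lit V) : UPReach Φ Ψ → ({m} : Clause V) ∈ Ψ →
      UPReach Φ (restrict Ψ {m})

/-- The set of variables occurring in `Φ`. -/
def varsOf (Φ : CnfForm V) : Finset V := Φ.biUnion fun c => c.image Prod.fst

/-- A Horn formula: every clause contains at most one positive literal. -/
def IsHorn (Φ : CnfForm V) : Prop := ∀ c ∈ Φ, (c.filter fun l => l.2 = true).card ≤ 1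

/-- `Φ⁻` : the negative clauses of `Φ` (no positive literal). -/
def negClauses (Φ : CnfForm V) : CnfForm V := Φ.filter fun c => ∀ l ∈ c, l.2 = false

/-- `Φ⁺` : the clauses of `Φ` with exactly one positive literal. -/
def posPart (Φ : CnfForm V) : CnfForm V :=
  Φ.filter fun c => (c.filter fun l => l.2 = true).card = 1

/-- The conditional sequential-counter AtMostK encoding of `y → (x_1 + ⋯ + x_n ≤ k)`:
`(¬x_1 ∨ s_{1,1})`; for `1 < j ≤ k` the clause `(¬y ∨ ¬s_{1,j})`; for `1 < i < n` the
clauses `(¬x_i ∨ s_{i,1})` and `(¬s_{i-1,1} ∨ s_{i,1})`; for `1 < i < n`, `1 < j ≤ k`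
the clauses `(¬x_i ∨ ¬s_{i-1,j-1} ∨ s_{i,j})` and `(¬s_{i-1,j} ∨ s_{i,j})`; and for
`1 < i ≤ n` the clause `(¬y ∨ ¬x_i ∨ ¬s_{i-1,k})`. -/
def seqAMKCond (n k : ℕ) (x : ℕ → V) (s : ℕ → ℕ → V) (y : V) : CnfForm V :=
  insert ({(x 1, false), (s 1 1, true)} : Clause V)
    (((Finset.Ioc 1 k).image fun j => ({(y, false), (s 1 j, false)} : Clause V))
      ∪ ((Finset.Ioo 1 n).biUnion fun i =>
          ({({(x i, false), (s i 1, true)} : Clause V),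
            ({(s (i - 1) 1, false), (s i 1, true)} : Clause V)} : CnfForm V))
      ∪ ((Finset.Ioo 1 n ×ˢ Finset.Ioc 1 k).biUnion fun q =>
          ({({(x q.1, false), (s (q.1 - 1) (q.2 - 1), false), (s q.1 q.2, true)} : Clause V),
            ({(s (q.1 - 1) q.2, false), (s q.1 q.2, true)} : Clause V)} : CnfForm V))
      ∪ ((Finset.Ioc 1 n).image fun i =>
          ({(y, false), (x i, false), (s (i - 1) k, false)} : Clause V)))

open Finset hiding restrict

def IsConsistent {α : Type} (σ : Finset (Lit α)) : Prop := ∀ l ∈ σ, (l.1, !l.2) ∉ σ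

def Forces {α : Type} (Φ : CnfForm α) (σ : Finset (Lit α)) (m : Lit α) : Prop :=
  ∃ c ∈ Φ, m ∈ c ∧ ∀ l ∈ c, l = m ∨ (l.1, !l.2) ∈ σ

theorem IsConsistent.mono {α : Type} {ρ σ : Finset (Lit α)} (h : IsConsistent σ)
    (hρ : ρ ⊆ σ) : IsConsistent ρ :=
  fun l hl hl' => h l (hρ hl) (hρ hl')

theorem Forces.mono {α : Type} {Φ : CnfForm α} {ρ σ : Finset (Lit α)} {m : Lit α}
    (h : Forces Φ ρ m) (hρ : ρ ⊆ σ) : Forces Φ σ m := by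
  obtain ⟨c, hc, hmc, hcm⟩ := h
  exact ⟨c, hc, hmc, fun l hl => (hcm l hl).imp_right (@hρ _)⟩

section UnitPropagation

variable {Φ : CnfForm V} {ρ τ : Finset (Lit V)} {m : Lit V}

theorem restrict_restrict (h : IsConsistent (ρ ∪ τ)) :
    restrict (restrict Φ ρ) τ = restrict Φ (ρ ∪ τ) := by
  unfold restrict
  rw [filter_image, image_image, filter_filter]
  ext c
  simp only [mem_image, mem_filter, Function.comp_apply, filter_filter, mem_union, not_or]
  constructor
  · rintro ⟨c, ⟨hc, hρc, hτc⟩, rfl⟩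
    refine ⟨c, ⟨hc, fun l hl hlc => ?_⟩, rfl⟩
    rcases hl with hl | hl
    · exact hρc l hl hlc
    · exact hτc l hl ⟨hlc, fun hl' => h l (mem_union_right _ hl) (mem_union_left _ hl')⟩
  · rintro ⟨c, ⟨hc, hσc⟩, rfl⟩
    exact ⟨c, ⟨hc, fun l hl => hσc l (.inl hl), fun l hl hlc => hσc l (.inr hl) hlc.1⟩, rfl⟩

theorem Forces.exists_mem_restrict (h : Forces Φ ρ m) (hρ : IsConsistent ρ) (hm : m ∉ ρ) :
    ∃ c ∈ restrict Φ ρ, c ⊆ {m} ∧ ((m.1, !m.2) ∉ ρ → m ∈ c) := by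
  obtain ⟨c, hc, hmc, hcm⟩ := h
  refine ⟨c.filter fun l => (l.1, !l.2) ∉ ρ, mem_image_of_mem _ (mem_filter.2 ⟨hc, ?_⟩), ?_,
    fun hm' => mem_filter.2 ⟨hmc, hm'⟩⟩
  · intro l hl hlc
    rcases hcm l hlc with rfl | hl'
    · exact hm hl
    · exact hρ l hl hl'
  · intro l hl
    obtain ⟨hlc, hl'⟩ := mem_filter.1 hl
    exact mem_singleton.2 ((hcm l hlc).resolve_right hl')

theorem Forces.upDerives (h : Forces Φ ρ m) (hρ : IsConsistent ρ) (hm : m ∉ ρ) :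
    UPDerives (restrict Φ ρ) m := by
  obtain ⟨c, hc, hcm, -⟩ := h.exists_mem_restrict hρ hm
  rcases subset_singleton_iff.1 hcm with rfl | rfl
  · exact .bot hc
  · exact .unit hc

theorem Forces.singleton_mem_restrict (h : Forces Φ ρ m) (hρ : IsConsistent ρ) (hm : m ∉ ρ)
    (hm' : (m.1, !m.2) ∉ ρ) : {m} ∈ restrict Φ ρ := by
  obtain ⟨c, hc, hcm, hmc⟩ := h.exists_mem_restrict hρ hm
  rwa [← Subset.antisymm hcm (singleton_subset_iff.2 (hmc hm'))]

theorem upDerives_restrict_of_schedule {ι : Type*} {I : Finset ι} {lit : ι → Lit V}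
    (rank : ι → ℕ) {l : Lit V} (hcons : IsConsistent (ρ ∪ I.image lit))
    (hsched : ∀ a ∈ I, Forces Φ (ρ ∪ (I.filter fun b => rank b < rank a).image lit) (lit a))
    (hgoal : Forces Φ (ρ ∪ I.image lit) l) (hl : l ∉ ρ ∪ I.image lit) :
    UPDerives (restrict Φ ρ) l := by
  induction hN : #(I.filter fun a => lit a ∉ ρ) using Nat.strong_induction_on generalizing ρ with
  | _ N ih =>
  rcases (I.filter fun a => lit a ∉ ρ).eq_empty_or_nonempty with hU | hU
  · have hσ : ρ ∪ I.image lit = ρ := union_eq_left.2 fun _ hm => by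
      obtain ⟨a, ha, rfl⟩ := mem_image.1 hm
      by_contra hρ
      exact (eq_empty_iff_forall_notMem.1 hU) a (mem_filter.2 ⟨ha, hρ⟩)
    rw [hσ] at hcons hgoal hl
    exact hgoal.upDerives hcons hl
  obtain ⟨a, haU, hmin⟩ := exists_min_image _ rank hU
  obtain ⟨haI, haρ⟩ := mem_filter.1 haU
  have hlitσ : lit a ∈ ρ ∪ I.image lit := mem_union_right _ (mem_image_of_mem _ haI)
  have hσ : ρ ∪ {lit a} ∪ I.image lit = ρ ∪ I.image lit := by
    rw [union_assoc, union_eq_right.2 (singleton_subset_iff.2 (mem_image_of_mem _ haI))]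
  -- the literals scheduled before `lit a` are already in `ρ`, by minimality of its rank
  have hforces : Forces Φ ρ (lit a) := (hsched a haI).mono <| union_subset subset_rfl
    fun _ hm => by
      obtain ⟨b, hb, rfl⟩ := mem_image.1 hm
      obtain ⟨hbI, hba⟩ := mem_filter.1 hb
      by_contra hbρ
      exact (hmin b (mem_filter.2 ⟨hbI, hbρ⟩)).not_gt hba
  refine .step (lit a) (hforces.singleton_mem_restrict (hcons.mono subset_union_left) haρ
    fun h => hcons _ hlitσ (mem_union_left _ h)) ?_
  rw [restrict_restrict (hcons.mono (hσ ▸ subset_union_left))]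
  refine ih _ ?_ (hσ ▸ hcons)
    (fun b hb => (hsched b hb).mono (union_subset_union_left subset_union_left))
    (hσ ▸ hgoal) (hσ ▸ hl) rfl
  rw [← hN]
  refine card_lt_card ((ssubset_iff_of_subset fun b hb => ?_).2 ⟨a, haU, fun ha => ?_⟩)
  · obtain ⟨hbI, hbρ⟩ := mem_filter.1 hb
    exact mem_filter.2 ⟨hbI, fun h => hbρ (mem_union_left _ h)⟩
  · exact (mem_filter.1 ha).2 (mem_union_right _ (mem_singleton_self _))

end UnitPropagation

section SequentialCounter

def prefixCount (T : Finset ℕ) (i : ℕ) : ℕ := #(T.filter (· ≤ i))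

theorem prefixCount_succ (T : Finset ℕ) (i : ℕ) :
    prefixCount T (i + 1) = prefixCount T i + if i + 1 ∈ T then 1 else 0 := by
  have hsplit : T.filter (· ≤ i + 1) = T.filter (· ≤ i) ∪ T.filter (· = i + 1) := by
    rw [← filter_or]
    exact filter_congr fun a _ => Nat.le_succ_iff
  rw [prefixCount, prefixCount, hsplit,
    card_union_of_disjoint (disjoint_filter.2 fun a _ h h' => by omega), filter_eq']
  split_ifs <;> rfl

theorem prefixCount_zero {T : Finset ℕ} (h : 0 ∉ T) : prefixCount T 0 = 0 := by
  rw [prefixCount, card_eq_zero, filter_eq_empty_iff]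
  intro a ha ha0
  exact h (Nat.le_zero.1 ha0 ▸ ha)

theorem prefixCount_eq_card {T : Finset ℕ} {i : ℕ} (h : ∀ a ∈ T, a ≤ i) :
    prefixCount T i = #T := by
  rw [prefixCount, filter_true_of_mem h]

def counterIndices (n k : ℕ) : Finset (ℕ × ℕ) := Icc 1 (n - 1) ×ˢ Icc 1 k

/-- The value of the counter variable `s_{i,ℓ}` when `x_i` is true exactly for `i ∈ T`:
`s_{i,ℓ}` holds iff at least `ℓ` of `x_1, …, x_i` are true. -/
def counterLit (T : Finset ℕ) (s : ℕ → ℕ → V) (p : ℕ × ℕ) : Lit V :=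
  (s p.1 p.2, decide (p.2 ≤ prefixCount T p.1))

/-- True counter literals propagate left to right, false ones right to left. -/
def counterRank (T : Finset ℕ) (n : ℕ) (p : ℕ × ℕ) : ℕ :=
  if p.2 ≤ prefixCount T p.1 then p.1 else n - p.1

def initialAssignment (x : ℕ → V) (y : V) (T : Finset ℕ) : Finset (Lit V) :=
  insert (y, true) (T.image fun i => (x i, true))

def counterAssignment (x : ℕ → V) (s : ℕ → ℕ → V) (y : V) (T : Finset ℕ) (n k r : ℕ) :
    Finset (Lit V) :=
  initialAssignment x y T ∪
    ((counterIndices n k).filter fun p => counterRank T n p < r).image (counterLit T s)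

variable {n k : ℕ} {x : ℕ → V} {s : ℕ → ℕ → V} {y : V} {T : Finset ℕ}

theorem start_mem_seqAMKCond {i : ℕ} (hi : 1 ≤ i) (hin : i < n) :
    ({(x i, false), (s i 1, true)} : Clause V) ∈ seqAMKCond n k x s y := by
  rcases hi.eq_or_lt with rfl | hi
  · exact mem_insert_self _ _
  · refine mem_insert_of_mem (mem_union_left _ (mem_union_left _ (mem_union_right _ ?_)))
    exact mem_biUnion.2 ⟨i, mem_Ioo.2 ⟨hi, hin⟩, by simp⟩

theorem step_mem_seqAMKCond {i ℓ : ℕ} (hi : 1 ≤ i) (hin : i + 1 < n) (hℓ : 1 ≤ ℓ) (hℓk : ℓ ≤ k) :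
    ({(s i ℓ, false), (s (i + 1) ℓ, true)} : Clause V) ∈ seqAMKCond n k x s y := by
  refine mem_insert_of_mem (mem_union_left _ ?_)
  rcases hℓ.eq_or_lt with rfl | hℓ
  · refine mem_union_left _ (mem_union_right _ (mem_biUnion.2 ⟨i + 1, ?_, by simp⟩))
    exact mem_Ioo.2 ⟨by omega, hin⟩
  · refine mem_union_right _ (mem_biUnion.2 ⟨(i + 1, ℓ), ?_, by simp⟩)
    exact mem_product.2 ⟨mem_Ioo.2 ⟨by omega, hin⟩, mem_Ioc.2 ⟨hℓ, hℓk⟩⟩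

theorem carry_mem_seqAMKCond {i ℓ : ℕ} (hi : 1 ≤ i) (hin : i + 1 < n) (hℓ : 1 ≤ ℓ) (hℓk : ℓ < k) :
    ({(x (i + 1), false), (s i ℓ, false), (s (i + 1) (ℓ + 1), true)} : Clause V) ∈
      seqAMKCond n k x s y := by
  refine mem_insert_of_mem (mem_union_left _ (mem_union_right _ ?_))
  refine mem_biUnion.2 ⟨(i + 1, ℓ + 1), ?_, by simp⟩
  exact mem_product.2 ⟨mem_Ioo.2 ⟨by omega, hin⟩, mem_Ioc.2 ⟨by omega, hℓk⟩⟩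

theorem overflow_mem_seqAMKCond {i : ℕ} (hi : 1 ≤ i) (hin : i + 1 ≤ n) :
    ({(y, false), (x (i + 1), false), (s i k, false)} : Clause V) ∈ seqAMKCond n k x s y :=
  mem_insert_of_mem (mem_union_right _ (mem_image.2 ⟨i + 1, mem_Ioc.2 ⟨by omega, hin⟩, by simp⟩))

theorem x_true_mem_initialAssignment {i : ℕ} (hi : i ∈ T) :
    ((x i, true) : Lit V) ∈ initialAssignment x y T :=
  mem_insert_of_mem (mem_image_of_mem _ hi)

theorem true_mem_counterAssignment {i ℓ r : ℕ} (hi : i ∈ Icc 1 (n - 1)) (hℓ : ℓ ∈ Icc 1 k)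
    (h : ℓ ≤ prefixCount T i) (hr : i < r) :
    ((s i ℓ, true) : Lit V) ∈ counterAssignment x s y T n k r := by
  refine mem_union_right _ (mem_image.2 ⟨(i, ℓ), mem_filter.2 ⟨mem_product.2 ⟨hi, hℓ⟩, ?_⟩, ?_⟩)
  · simpa [counterRank, h] using hr
  · simp [counterLit, h]

theorem false_mem_counterAssignment {i ℓ r : ℕ} (hi : i ∈ Icc 1 (n - 1)) (hℓ : ℓ ∈ Icc 1 k)
    (h : prefixCount T i < ℓ) (hr : n - i < r) :
    ((s i ℓ, false) : Lit V) ∈ counterAssignment x s y T n k r := by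
  refine mem_union_right _ (mem_image.2 ⟨(i, ℓ), mem_filter.2 ⟨mem_product.2 ⟨hi, hℓ⟩, ?_⟩, ?_⟩)
  · simpa [counterRank, h.not_ge] using hr
  · simp [counterLit, h]

theorem forces_counter_true (hT : T ⊆ Icc 1 n) {i ℓ : ℕ} (hi : i ∈ Icc 1 (n - 1))
    (hℓ : ℓ ∈ Icc 1 k) (h : ℓ ≤ prefixCount T i) :
    Forces (seqAMKCond n k x s y) (counterAssignment x s y T n k i) (s i ℓ, true) := by
  rw [mem_Icc] at hi hℓ
  obtain ⟨i, rfl⟩ : ∃ i', i = i' + 1 := ⟨i - 1, by omega⟩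
  have h0 := prefixCount_zero fun h0 => by simpa using hT h0
  have hsucc := prefixCount_succ T i
  by_cases hprev : ℓ ≤ prefixCount T i
  · have hi1 : 1 ≤ i := Nat.one_le_iff_ne_zero.2 fun h => by subst h; omega
    refine ⟨_, step_mem_seqAMKCond hi1 (by omega) hℓ.1 hℓ.2, by simp, ?_⟩
    simp only [mem_insert, mem_singleton]
    rintro l (rfl | rfl)
    · exact .inr (true_mem_counterAssignment (by simp; omega) (by simp; omega) hprev (by omega))
    · exact .inl rfl
  -- otherwise `x_{i+1}` is the `ℓ`-th true variable
  have hiT : i + 1 ∈ T := by by_contra hiT; simp [hiT] at hsucc; omega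
  simp only [hiT, if_true] at hsucc
  obtain rfl : ℓ = prefixCount T i + 1 := by omega
  have hxi : ((x (i + 1), true) : Lit V) ∈ counterAssignment x s y T n k (i + 1) :=
    mem_union_left _ (x_true_mem_initialAssignment hiT)
  rcases Nat.eq_zero_or_pos (prefixCount T i) with hc | hc
  · rw [hc, zero_add]
    refine ⟨_, start_mem_seqAMKCond (i := i + 1) (by omega) (by omega), by simp, ?_⟩
    simp only [mem_insert, mem_singleton]
    rintro l (rfl | rfl)
    · exact .inr hxi
    · exact .inl rfl
  · have hi1 : 1 ≤ i := Nat.one_le_iff_ne_zero.2 fun h => by subst h; omega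
    refine ⟨_, carry_mem_seqAMKCond hi1 (by omega) hc (by omega), by simp, ?_⟩
    simp only [mem_insert, mem_singleton]
    rintro l (rfl | rfl | rfl)
    · exact .inr hxi
    · exact .inr (true_mem_counterAssignment (by simp; omega) (by simp; omega) le_rfl (by omega))
    · exact .inl rfl

theorem forces_counter_false (hT : T ⊆ Icc 1 n) (hTcard : #T = k) {i ℓ : ℕ}
    (hi : i ∈ Icc 1 (n - 1)) (hℓ : ℓ ∈ Icc 1 k) (h : prefixCount T i < ℓ) :
    Forces (seqAMKCond n k x s y) (counterAssignment x s y T n k (n - i)) (s i ℓ, false) := by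
  rw [mem_Icc] at hi hℓ
  have hn : prefixCount T n = k := hTcard ▸ prefixCount_eq_card fun a ha => (mem_Icc.1 (hT ha)).2
  have hsucc := prefixCount_succ T i
  by_cases hnext : prefixCount T (i + 1) < ℓ
  · have hin : i + 1 < n := lt_of_le_of_ne (by omega) fun h => by subst h; omega
    refine ⟨_, step_mem_seqAMKCond hi.1 hin hℓ.1 hℓ.2, by simp, ?_⟩
    simp only [mem_insert, mem_singleton]
    rintro l (rfl | rfl)
    · exact .inl rfl
    · exact .inr (false_mem_counterAssignment (by simp; omega) (by simp; omega) hnext (by omega))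
  -- otherwise `x_{i+1}` is the `ℓ`-th true variable
  have hiT : i + 1 ∈ T := by by_contra hiT; simp [hiT] at hsucc; omega
  simp only [hiT, if_true] at hsucc
  have hxi : ((x (i + 1), true) : Lit V) ∈ counterAssignment x s y T n k (n - i) :=
    mem_union_left _ (x_true_mem_initialAssignment hiT)
  rcases hℓ.2.eq_or_lt with rfl | hℓk
  · refine ⟨_, overflow_mem_seqAMKCond hi.1 (by omega), by simp, ?_⟩
    simp only [mem_insert, mem_singleton]
    rintro l (rfl | rfl | rfl)
    · exact .inr (mem_union_left _ (mem_insert_self _ _))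
    · exact .inr hxi
    · exact .inl rfl
  · have hin : i + 1 < n := lt_of_le_of_ne (by omega) fun h => by subst h; omega
    refine ⟨_, carry_mem_seqAMKCond hi.1 hin hℓ.1 hℓk, by simp, ?_⟩
    simp only [mem_insert, mem_singleton]
    rintro l (rfl | rfl | rfl)
    · exact .inr hxi
    · exact .inl rfl
    · exact .inr (false_mem_counterAssignment (by simp; omega) (by simp; omega) (by omega)
        (by omega))

theorem forces_counterLit (hT : T ⊆ Icc 1 n) (hTcard : #T = k) {p : ℕ × ℕ}
    (hp : p ∈ counterIndices n k) :
    Forces (seqAMKCond n k x s y) (counterAssignment x s y T n k (counterRank T n p))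
      (counterLit T s p) := by
  obtain ⟨hi, hℓ⟩ := mem_product.1 hp
  unfold counterLit counterRank
  split_ifs with h
  · simpa [h] using forces_counter_true hT hi hℓ h
  · simpa [h] using forces_counter_false hT hTcard hi hℓ (not_le.1 h)

/-- The clause that finally becomes unit is determined by the number `c` of true variables
before `x_j`: `(¬x_j ∨ s_{j,1})` if `c = 0`, `(¬x_j ∨ ¬s_{j-1,c} ∨ s_{j,c+1})` if `0 < c < k`,
and `(¬y ∨ ¬x_j ∨ ¬s_{j-1,k})` if `c = k`. -/
theorem forces_neg_x (hk : 1 ≤ k) (hT : T ⊆ Icc 1 n) (hTcard : #T = k) {j : ℕ}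
    (hj : j ∈ Icc 1 n) (hjT : j ∉ T) :
    Forces (seqAMKCond n k x s y) (counterAssignment x s y T n k (n + 1)) (x j, false) := by
  rw [mem_Icc] at hj
  obtain ⟨j, rfl⟩ : ∃ j', j = j' + 1 := ⟨j - 1, by omega⟩
  have h0 := prefixCount_zero fun h0 => by simpa using hT h0
  have hn : prefixCount T n = k := hTcard ▸ prefixCount_eq_card fun a ha => (mem_Icc.1 (hT ha)).2
  have hsucc := prefixCount_succ T j
  simp only [hjT, if_false, add_zero] at hsucc
  have hck : prefixCount T j ≤ k := hTcard ▸ card_filter_le _ _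
  rcases hck.eq_or_lt with hc | hc
  · have hj1 : 1 ≤ j := Nat.one_le_iff_ne_zero.2 fun h => by subst h; omega
    refine ⟨_, overflow_mem_seqAMKCond hj1 hj.2, by simp, ?_⟩
    simp only [mem_insert, mem_singleton]
    rintro l (rfl | rfl | rfl)
    · exact .inr (mem_union_left _ (mem_insert_self _ _))
    · exact .inl rfl
    · exact .inr (true_mem_counterAssignment (by simp; omega) (by simp; omega) hc.ge (by omega))
  have hjn : j + 1 < n := lt_of_le_of_ne hj.2 fun h => by rw [← h] at hn; omega
  rcases Nat.eq_zero_or_pos (prefixCount T j) with h0' | hpos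
  · refine ⟨_, start_mem_seqAMKCond (i := j + 1) hj.1 hjn, by simp, ?_⟩
    simp only [mem_insert, mem_singleton]
    rintro l (rfl | rfl)
    · exact .inl rfl
    · exact .inr (false_mem_counterAssignment (by simp; omega) (by simp; omega) (by omega)
        (by omega))
  · have hj1 : 1 ≤ j := Nat.one_le_iff_ne_zero.2 fun h => by subst h; omega
    refine ⟨_, carry_mem_seqAMKCond hj1 hjn hpos hc, by simp, ?_⟩
    simp only [mem_insert, mem_singleton]
    rintro l (rfl | rfl | rfl)
    · exact .inl rfl
    · exact .inr (true_mem_counterAssignment (by simp; omega) (by simp; omega) le_rfl (by omega))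
    · exact .inr (false_mem_counterAssignment (by simp; omega) (by simp; omega) (by omega)
        (by omega))

theorem isConsistent_initial_union_counter
    (hsinj : ∀ i ∈ Icc 1 (n - 1), ∀ j ∈ Icc 1 k, ∀ i' ∈ Icc 1 (n - 1), ∀ j' ∈ Icc 1 k,
      s i j = s i' j' → i = i' ∧ j = j')
    (hxs : ∀ l ∈ Icc 1 n, ∀ i ∈ Icc 1 (n - 1), ∀ j ∈ Icc 1 k, x l ≠ s i j)
    (hsy : ∀ i ∈ Icc 1 (n - 1), ∀ j ∈ Icc 1 k, s i j ≠ y) (hT : T ⊆ Icc 1 n) :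
    IsConsistent (initialAssignment x y T ∪ (counterIndices n k).image (counterLit T s)) := by
  have hinit : ∀ l ∈ initialAssignment x y T,
      l.2 = true ∧ ∀ p ∈ counterIndices n k, s p.1 p.2 ≠ l.1 := by
    intro l hl
    rcases mem_insert.1 hl with rfl | hl
    · exact ⟨rfl, fun p hp => hsy _ (mem_product.1 hp).1 _ (mem_product.1 hp).2⟩
    · obtain ⟨i, hi, rfl⟩ := mem_image.1 hl
      exact ⟨rfl, fun p hp => (hxs i (hT hi) _ (mem_product.1 hp).1 _ (mem_product.1 hp).2).symm⟩
  intro l hl hl'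
  rcases mem_union.1 hl with hl | hl <;> rcases mem_union.1 hl' with hl' | hl'
  · simpa [(hinit l hl).1] using (hinit _ hl').1
  · obtain ⟨p, hp, hpl⟩ := mem_image.1 hl'
    exact (hinit l hl).2 p hp (congrArg Prod.fst hpl)
  · obtain ⟨p, hp, rfl⟩ := mem_image.1 hl
    exact (hinit _ hl').2 p hp rfl
  · obtain ⟨p, hp, rfl⟩ := mem_image.1 hl
    obtain ⟨q, hq, hqp⟩ := mem_image.1 hl'
    obtain ⟨hq1, hq2⟩ := mem_product.1 hq
    obtain ⟨hp1, hp2⟩ := mem_product.1 hp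
    obtain ⟨h1, h2⟩ := hsinj _ hq1 _ hq2 _ hp1 _ hp2 (congrArg Prod.fst hqp)
    obtain rfl : q = p := Prod.ext h1 h2
    simpa [counterLit] using congrArg Prod.snd hqp

theorem neg_x_notMem_initial_union_counter
    (hxs : ∀ l ∈ Icc 1 n, ∀ i ∈ Icc 1 (n - 1), ∀ j ∈ Icc 1 k, x l ≠ s i j)
    {j : ℕ} (hj : j ∈ Icc 1 n) :
    ((x j, false) : Lit V) ∉
      initialAssignment x y T ∪ (counterIndices n k).image (counterLit T s) := by
  simp only [initialAssignment, mem_union, mem_insert, mem_image, Prod.ext_iff]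
  rintro ((⟨-, ⟨⟩⟩ | ⟨-, -, -, ⟨⟩⟩) | ⟨p, hp, h, -⟩)
  exact hxs j hj _ (mem_product.1 hp).1 _ (mem_product.1 hp).2 h.symm

end SequentialCounter

theorem stmt14_general {V : Type} [DecidableEq V] (n k : ℕ) (hk : 1 ≤ k)
    (x : ℕ → V) (s : ℕ → ℕ → V) (y : V)
    (hsinj : ∀ i ∈ Finset.Icc 1 (n - 1), ∀ j ∈ Finset.Icc 1 k,
      ∀ i' ∈ Finset.Icc 1 (n - 1), ∀ j' ∈ Finset.Icc 1 k,
        s i j = s i' j' → i = i' ∧ j = j')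
    (hxs : ∀ l ∈ Finset.Icc 1 n, ∀ i ∈ Finset.Icc 1 (n - 1), ∀ j ∈ Finset.Icc 1 k,
      x l ≠ s i j)
    (hsy : ∀ i ∈ Finset.Icc 1 (n - 1), ∀ j ∈ Finset.Icc 1 k, s i j ≠ y)
    (T : Finset ℕ) (hT : T ⊆ Finset.Icc 1 n) (hTcard : T.card = k) :
    ∀ j ∈ Finset.Icc 1 n, j ∉ T →
      UPDerives (restrict (seqAMKCond n k x s y)
          (insert ((y, true) : Lit V) (T.image fun i => ((x i, true) : Lit V))))
        (x j, false) := by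
  intro j hj hjT
  exact upDerives_restrict_of_schedule (I := counterIndices n k) (lit := counterLit T s)
    (counterRank T n) (isConsistent_initial_union_counter hsinj hxs hsy hT)
    (fun p hp => forces_counterLit hT hTcard hp)
    ((forces_neg_x hk hT hTcard hj hjT).mono
      (union_subset_union_right (image_subset_image (filter_subset _ _))))
    (neg_x_notMem_initial_union_counter hxs hj)

/-- For the conditional sequential-counter AtMostK encoding of
`y → (x_1 + ⋯ + x_n ≤ k)`, assigning `y` to true and any `k` distinct variables `x_i`
to true makes unit propagation derive `¬x_j` from the restricted formula for every
remaining index `j`. -/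
theorem stmt14 {V : Type} [DecidableEq V] (n k : ℕ) (hn : 2 ≤ n) (hk : 1 ≤ k) (hkn : k < n)
    (x : ℕ → V) (s : ℕ → ℕ → V) (y : V)
    (hx : ∀ i ∈ Finset.Icc 1 n, ∀ j ∈ Finset.Icc 1 n, x i = x j → i = j)
    (hsinj : ∀ i ∈ Finset.Icc 1 (n - 1), ∀ j ∈ Finset.Icc 1 k,
      ∀ i' ∈ Finset.Icc 1 (n - 1), ∀ j' ∈ Finset.Icc 1 k,
        s i j = s i' j' → i = i' ∧ j = j')
    (hxs : ∀ l ∈ Finset.Icc 1 n, ∀ i ∈ Finset.Icc 1 (n - 1), ∀ j ∈ Finset.Icc 1 k,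
      x l ≠ s i j)
    (hxy : ∀ i ∈ Finset.Icc 1 n, x i ≠ y)
    (hsy : ∀ i ∈ Finset.Icc 1 (n - 1), ∀ j ∈ Finset.Icc 1 k, s i j ≠ y)
    (T : Finset ℕ) (hT : T ⊆ Finset.Icc 1 n) (hTcard : T.card = k) :
    ∀ j ∈ Finset.Icc 1 n, j ∉ T →
      UPDerives (restrict (seqAMKCond n k x s y)
          (insert ((y, true) : Lit V) (T.image fun i => ((x i, true) : Lit V))))
        (x j, false) :=
  stmt14_general n k hk x s y hsinj hxs hsy T hT hTcard
end

section
/- Let n ≥ 2 and 1 ≤ k < n, and let Φ be the conditional sequential-counter AtMostK encoding of y → (x_1 + ⋯ + x_n ≤ k), consisting of: (¬x_1 ∨ s_{1,1}); for 1 < j ≤ k the clause (¬y ∨ ¬s_{1,j}); for 1 < i < n the clauses (¬x_i ∨ s_{i,1}) and (¬s_{i−1,1} ∨ s_{i,1}); for 1 < i < n and 1 < j ≤ k the clauses (¬x_i ∨ ¬s_{i−1,j−1} ∨ s_{i,j}) and (¬s_{i−1,j} ∨ s_{i,j}); and for 1 < i ≤ n the clause (¬y ∨ ¬x_i ∨ ¬s_{i−1,k}).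 Then a complete assignment ν of truth values to y, x_1, …, x_n extends to an assignment of the variables s_{i,j} satisfying every clause of Φ if and only if ν(y) = true implies that at most k of ν(x_1), …, ν(x_n) are true. -/
variable {V : Type} [DecidableEq V]

/-! The counter variable `s i j` stands for "at least `j` of `x 1, …, x i` are true". In any
model the implicational clauses propagate this lower bound, so if `y` holds and more than `k` of
the `x i` are true, then at the first `i` where the count reaches `k + 1` both `x i` and
`s (i - 1) k` are true, violating `¬y ∨ ¬x i ∨ ¬s (i - 1) k`. Conversely, giving each `s i j`
exactly the value "`j ≤` number of true `x l` with `l ≤ i`" satisfies every clause as soon as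
`y` implies that this number is at most `k` at `i = n`; as the `s i j` are distinct from each
other, from `y` and from the `x i`, this extends `ν`. -/

open Finset

theorem Finset.forall_mem_biUnion {α β : Type*} [DecidableEq β] {s : Finset α}
    {t : α → Finset β} {p : β → Prop} : (∀ b ∈ s.biUnion t, p b) ↔ ∀ a ∈ s, ∀ b ∈ t a, p b := by
  simp only [mem_biUnion, forall_exists_index, and_imp]
  exact forall_comm.trans (forall_congr' fun _ => forall_comm)

theorem Set.InjOn.exists_extend {α β γ : Type*} {f : α → β} {S : Set α} (hf : S.InjOn f)
    (g : α → γ) (ν : β → γ) :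
    ∃ μ : β → γ, (∀ a ∈ S, μ (f a) = g a) ∧ ∀ v ∉ f '' S, μ v = ν v := by
  refine ⟨Function.extend (S.domRestrict f) (S.domRestrict g) ν, fun a ha => ?_, fun v hv => ?_⟩
  · exact (Set.injOn_iff_injective.1 hf).extend_apply (S.domRestrict g) ν ⟨a, ha⟩
  · exact Function.extend_apply' _ _ _ fun ⟨a, ha⟩ => hv ⟨a, a.2, ha⟩

def countTrue (b : ℕ → Bool) (m : ℕ) : ℕ := #{i ∈ Icc 1 m | b i = true}

section countTrue

variable (b : ℕ → Bool)

@[simp]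
theorem countTrue_zero : countTrue b 0 = 0 := rfl

theorem countTrue_succ (m : ℕ) : countTrue b (m + 1) = countTrue b m + (b (m + 1)).toNat := by
  have hnew : m + 1 ∉ {i ∈ Icc 1 m | b i = true} := by simp
  rw [countTrue, countTrue, ← insert_Icc_right_eq_Icc_add_one (by omega), filter_insert]
  cases b (m + 1) <;> simp [card_insert_of_notMem hnew]

theorem countTrue_mono : Monotone (countTrue b) := fun _ _ h =>
  card_le_card (filter_subset_filter _ (Icc_subset_Icc_right h))

theorem countTrue_le_self (m : ℕ) : countTrue b m ≤ m :=
  (card_filter_le _ _).trans (by simp)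

variable {b}

theorem countTrue_sub_one_lt {i : ℕ} (hi : 1 ≤ i) (hb : b i = true) :
    countTrue b (i - 1) < countTrue b i := by
  obtain ⟨m, rfl⟩ : ∃ m, i = m + 1 := ⟨i - 1, by omega⟩
  simp [countTrue_succ, hb]

end countTrue

/-- The clauses of `seqAMKCond` read as implications between the truth values `y`, `b i` of
`x i` and `t i j` of `s i j`. -/
structure IsSeqCounterModel (n k : ℕ) (y : Bool) (b : ℕ → Bool) (t : ℕ → ℕ → Bool) : Prop where
  first : b 1 = true → t 1 1 = true
  first_row : ∀ j ∈ Ioc 1 k, y = true → t 1 j = false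
  start : ∀ i ∈ Ioo 1 n, b i = true → t i 1 = true
  keep_start : ∀ i ∈ Ioo 1 n, t (i - 1) 1 = true → t i 1 = true
  step : ∀ i ∈ Ioo 1 n, ∀ j ∈ Ioc 1 k, b i = true → t (i - 1) (j - 1) = true → t i j = true
  keep : ∀ i ∈ Ioo 1 n, ∀ j ∈ Ioc 1 k, t (i - 1) j = true → t i j = true
  bound : ∀ i ∈ Ioc 1 n, y = true → b i = true → t (i - 1) k = false

theorem satisfies_seqAMKCond_iff {n k : ℕ} {x : ℕ → V} {s : ℕ → ℕ → V} {y : V} {μ : V → Bool} :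
    (∀ c ∈ seqAMKCond n k x s y, ∃ l ∈ c, μ l.1 = l.2) ↔
      IsSeqCounterModel n k (μ y) (fun i => μ (x i)) (fun i j => μ (s i j)) := by
  simp only [seqAMKCond, forall_mem_insert, forall_mem_union, forall_mem_image, forall_mem_biUnion,
    Prod.forall, mem_product, and_imp, exists_mem_insert, mem_singleton, exists_eq_left, forall_eq,
    imp_and, forall_and]
  simp only [← Bool.not_eq_true, ← imp_iff_not_or]
  simp only [Bool.not_eq_true]
  constructor
  · rintro ⟨h1, ⟨⟨h2, h3, h4⟩, h5, h6⟩, h7⟩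
    exact ⟨h1, h2, h3, h4, fun i hi j hj => h5 i j hi hj, fun i hi j hj => h6 i j hi hj, h7⟩
  · rintro ⟨h1, h2, h3, h4, h5, h6, h7⟩
    exact ⟨h1, ⟨⟨h2, h3, h4⟩, fun i j hi hj => h5 i hi j hj, fun i j hi hj => h6 i hi j hj⟩, h7⟩

namespace IsSeqCounterModel

variable {n k : ℕ} {y : Bool} {b : ℕ → Bool} {t : ℕ → ℕ → Bool}

theorem congr (h : IsSeqCounterModel n k y b t) (hn : 2 ≤ n) (hk : 1 ≤ k) {b' : ℕ → Bool}
    {t' : ℕ → ℕ → Bool} (hb : ∀ i ∈ Icc 1 n, b i = b' i)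
    (ht : ∀ i ∈ Icc 1 (n - 1), ∀ j ∈ Icc 1 k, t i j = t' i j) :
    IsSeqCounterModel n k y b' t' := by
  obtain ⟨first, first_row, start, keep_start, step, keep, bound⟩ := h
  simp only [mem_Icc, mem_Ioo, mem_Ioc, and_imp] at *
  constructor <;> intros <;> grind

theorem true_of_le_countTrue (h : IsSeqCounterModel n k y b t) {i j : ℕ} (hi : i ∈ Ioo 0 n)
    (hj : j ∈ Icc 1 k) (hji : j ≤ countTrue b i) : t i j = true := by
  induction i generalizing j with
  | zero => simp at hi
  | succ i ih =>
    simp only [mem_Ioo, mem_Icc] at *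
    have hcount := countTrue_succ b i
    rcases Nat.eq_zero_or_pos i with rfl | hi0
    · have hb1 : b 1 = true := by cases hb : b 1 <;> simp_all
      obtain rfl : j = 1 := by have := countTrue_le_self b (0 + 1); omega
      exact h.first hb1
    by_cases hprev : j ≤ countTrue b i
    · have hij := ih ⟨hi0, by omega⟩ hj hprev
      rcases hj.1.eq_or_lt with rfl | hj1
      · exact h.keep_start (i + 1) (mem_Ioo.2 ⟨by omega, by omega⟩) (by simpa using hij)
      · exact h.keep (i + 1) (mem_Ioo.2 ⟨by omega, by omega⟩) j (mem_Ioc.2 ⟨hj1, hj.2⟩) (by simpa using hij)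
    · have hb : b (i + 1) = true := by cases hb : b (i + 1) <;> simp_all
      rw [hb, Bool.toNat_true] at hcount
      rcases hj.1.eq_or_lt with rfl | hj1
      · exact h.start (i + 1) (mem_Ioo.2 ⟨by omega, by omega⟩) hb
      · have hij := ih (j := j - 1) ⟨hi0, by omega⟩ ⟨by omega, by omega⟩ (by omega)
        exact h.step (i + 1) (mem_Ioo.2 ⟨by omega, by omega⟩) j (mem_Ioc.2 ⟨hj1, hj.2⟩) hb (by simpa using hij)

theorem countTrue_le (h : IsSeqCounterModel n k y b t) (hk : 1 ≤ k) (hy : y = true) :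
    countTrue b n ≤ k := by
  suffices ∀ m ≤ n, countTrue b m ≤ k from this n le_rfl
  intro m
  induction m with
  | zero => simp
  | succ m ih =>
    intro hm
    rw [countTrue_succ]
    cases hb : b (m + 1)
    · simpa using ih (by omega)
    · rw [Bool.toNat_true]
      by_contra! hcontra
      have hmk : countTrue b m = k := by have := ih (by omega); omega
      have hm1 : 1 ≤ m := by have := countTrue_le_self b m; omega
      have hsk : t m k = true :=
        h.true_of_le_countTrue (mem_Ioo.2 ⟨hm1, by omega⟩) (mem_Icc.2 ⟨hk, le_rfl⟩) hmk.ge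
      have hsk' := h.bound (m + 1) (mem_Ioc.2 ⟨by omega, hm⟩) hy hb
      simp [hsk] at hsk'

end IsSeqCounterModel

theorem isSeqCounterModel_countTrue {n k : ℕ} {y : Bool} {b : ℕ → Bool}
    (hy : y = true → countTrue b n ≤ k) :
    IsSeqCounterModel n k y b (fun i j => decide (j ≤ countTrue b i)) := by
  have hone : countTrue b 1 ≤ 1 := countTrue_le_self b 1
  refine ⟨fun hb => ?_, fun j hj _ => ?_, fun i hi hb => ?_, fun i hi hprev => ?_,
    fun i hi j hj hb hprev => ?_, fun i hi j hj hprev => ?_, fun i hi hy' hb => ?_⟩ <;>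
    simp only [mem_Ioo, mem_Ioc, decide_eq_true_eq, decide_eq_false_iff_not, not_le] at *
  · have := countTrue_sub_one_lt le_rfl hb
    simp only [Nat.sub_self, countTrue_zero] at this
    omega
  · omega
  · have := countTrue_sub_one_lt (by omega) hb; omega
  · exact hprev.trans (countTrue_mono b (by omega))
  · have := countTrue_sub_one_lt (by omega) hb; omega
  · exact hprev.trans (countTrue_mono b (by omega))
  · have := countTrue_sub_one_lt (by omega) hb
    have := countTrue_mono b hi.2
    have := hy hy'
    omega

theorem stmt15_general {V : Type} [DecidableEq V] (n k : ℕ) (hn : 2 ≤ n) (hk : 1 ≤ k)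
    (x : ℕ → V) (s : ℕ → ℕ → V) (y : V)
    (hsinj : ∀ i ∈ Finset.Icc 1 (n - 1), ∀ j ∈ Finset.Icc 1 k,
      ∀ i' ∈ Finset.Icc 1 (n - 1), ∀ j' ∈ Finset.Icc 1 k,
        s i j = s i' j' → i = i' ∧ j = j')
    (hxs : ∀ l ∈ Finset.Icc 1 n, ∀ i ∈ Finset.Icc 1 (n - 1), ∀ j ∈ Finset.Icc 1 k,
      x l ≠ s i j)
    (hsy : ∀ i ∈ Finset.Icc 1 (n - 1), ∀ j ∈ Finset.Icc 1 k, s i j ≠ y)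
    (ν : V → Bool) :
    (∃ μ : V → Bool, μ y = ν y ∧ (∀ i ∈ Finset.Icc 1 n, μ (x i) = ν (x i)) ∧
        ∀ c ∈ seqAMKCond n k x s y, ∃ l ∈ c, μ l.1 = l.2) ↔
      (ν y = true → ((Finset.Icc 1 n).filter fun i => ν (x i) = true).card ≤ k) := by
  change _ ↔ (ν y = true → countTrue (fun i => ν (x i)) n ≤ k)
  constructor
  · rintro ⟨μ, hμy, hμx, hsat⟩ hy
    exact ((satisfies_seqAMKCond_iff.1 hsat).congr hn hk hμx fun _ _ _ _ => rfl).countTrue_le hk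
      (hμy ▸ hy)
  · intro hcount
    let box : Set (ℕ × ℕ) := {p | p.1 ∈ Icc 1 (n - 1) ∧ p.2 ∈ Icc 1 k}
    have hinj : box.InjOn fun p => s p.1 p.2 := fun p hp q hq hpq =>
      Prod.ext_iff.2 (hsinj p.1 hp.1 p.2 hp.2 q.1 hq.1 q.2 hq.2 hpq)
    obtain ⟨μ, hμs, hμν⟩ :=
      hinj.exists_extend (fun p => decide (p.2 ≤ countTrue (fun i => ν (x i)) p.1)) ν
    have hμy : μ y = ν y := hμν y fun ⟨p, hp, hpy⟩ => hsy p.1 hp.1 p.2 hp.2 hpy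
    have hμx : ∀ i ∈ Icc 1 n, μ (x i) = ν (x i) := fun i hi =>
      hμν _ fun ⟨p, hp, hpx⟩ => hxs i hi p.1 hp.1 p.2 hp.2 hpx.symm
    refine ⟨μ, hμy, hμx, satisfies_seqAMKCond_iff.2 ?_⟩
    rw [hμy]
    exact (isSeqCounterModel_countTrue hcount).congr hn hk (fun i hi => (hμx i hi).symm)
      fun i hi j hj => (hμs (i, j) ⟨hi, hj⟩).symm

/-- A complete assignment `ν` of the variables `y, x_1, …, x_n`
extends to an assignment of the variables `s_{i,j}` satisfying every clause of the
conditional sequential-counter AtMostK encoding iff `ν y = true` implies that at most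
`k` of the `ν (x i)` are true. -/
theorem stmt15 {V : Type} [DecidableEq V] (n k : ℕ) (hn : 2 ≤ n) (hk : 1 ≤ k) (hkn : k < n)
    (x : ℕ → V) (s : ℕ → ℕ → V) (y : V)
    (hx : ∀ i ∈ Finset.Icc 1 n, ∀ j ∈ Finset.Icc 1 n, x i = x j → i = j)
    (hsinj : ∀ i ∈ Finset.Icc 1 (n - 1), ∀ j ∈ Finset.Icc 1 k,
      ∀ i' ∈ Finset.Icc 1 (n - 1), ∀ j' ∈ Finset.Icc 1 k,
        s i j = s i' j' → i = i' ∧ j = j')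
    (hxs : ∀ l ∈ Finset.Icc 1 n, ∀ i ∈ Finset.Icc 1 (n - 1), ∀ j ∈ Finset.Icc 1 k,
      x l ≠ s i j)
    (hxy : ∀ i ∈ Finset.Icc 1 n, x i ≠ y)
    (hsy : ∀ i ∈ Finset.Icc 1 (n - 1), ∀ j ∈ Finset.Icc 1 k, s i j ≠ y)
    (ν : V → Bool) :
    (∃ μ : V → Bool, μ y = ν y ∧ (∀ i ∈ Finset.Icc 1 n, μ (x i) = ν (x i)) ∧
        ∀ c ∈ seqAMKCond n k x s y, ∃ l ∈ c, μ l.1 = l.2) ↔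
      (ν y = true → ((Finset.Icc 1 n).filter fun i => ν (x i) = true).card ≤ k) :=
  stmt15_general n k hn hk x s y hsinj hxs hsy ν
end

section
/- Let n ≥ 2 and 1 ≤ k < n, and let Φ be the formula obtained by disjunctively adding ¬y to every clause of the sequential unary counter encoding of x_1 + ⋯ + x_n ≤ k, i.e., the clauses: (¬y ∨ ¬x_1 ∨ s_{1,1}); for 1 < j ≤ k the clause (¬y ∨ ¬s_{1,j}); for 1 < i < n the clauses (¬y ∨ ¬x_i ∨ s_{i,1}) and (¬y ∨ ¬s_{i−1,1} ∨ s_{i,1}); for 1 < i < n and 1 < j ≤ k the clauses (¬y ∨ ¬x_i ∨ ¬s_{i−1,j−1} ∨ s_{i,j}) and (¬y ∨ ¬s_{i−1,j} ∨ s_{i,j}); and for 1 < i ≤ n the clause (¬y ∨ ¬x_i ∨ ¬s_{i−1,k}). Then assigning any k+1 distinct variables among x_1, …, x_n to true (with y and all s_{i,j} unassigned) produces a restricted formula containing no unit clause, so unit propagation derives no literal; in particular ¬y is not derived, and hence this encoding does not maintain generalized arc consistency for y → (x_1 + ⋯ + x_n ≤ k). -/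
variable {V : Type} [DecidableEq V]

/-- The sequential unary counter encoding of `x_1 + ⋯ + x_n ≤ k` with `¬y` added
disjunctively to *every* clause. -/
def seqAMKAllY (n k : ℕ) (x : ℕ → V) (s : ℕ → ℕ → V) (y : V) : CnfForm V :=
  insert ({(y, false), (x 1, false), (s 1 1, true)} : Clause V)
    (((Finset.Ioc 1 k).image fun j => ({(y, false), (s 1 j, false)} : Clause V))
      ∪ ((Finset.Ioo 1 n).biUnion fun i =>
          ({({(y, false), (x i, false), (s i 1, true)} : Clause V),
            ({(y, false), (s (i - 1) 1, false), (s i 1, true)} : Clause V)} : CnfForm V))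
      ∪ ((Finset.Ioo 1 n ×ˢ Finset.Ioc 1 k).biUnion fun q =>
          ({({(y, false), (x q.1, false), (s (q.1 - 1) (q.2 - 1), false),
              (s q.1 q.2, true)} : Clause V),
            ({(y, false), (s (q.1 - 1) q.2, false), (s q.1 q.2, true)} : Clause V)} : CnfForm V))
      ∪ ((Finset.Ioc 1 n).image fun i =>
          ({(y, false), (x i, false), (s (i - 1) k, false)} : Clause V)))

/-- Adding `¬y` to every clause of the sequential unary counter
encoding of `x_1 + ⋯ + x_n ≤ k` breaks GAC: assigning any `k + 1` distinct variables
`x_i` to true yields a restricted formula with no unit clause, so unit propagation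
derives no literal — in particular not `¬y`. -/
theorem stmt17 {V : Type} [DecidableEq V] (n k : ℕ) (hn : 2 ≤ n) (hk : 1 ≤ k) (hkn : k < n)
    (x : ℕ → V) (s : ℕ → ℕ → V) (y : V)
    (hx : ∀ i ∈ Finset.Icc 1 n, ∀ j ∈ Finset.Icc 1 n, x i = x j → i = j)
    (hsinj : ∀ i ∈ Finset.Icc 1 (n - 1), ∀ j ∈ Finset.Icc 1 k,
      ∀ i' ∈ Finset.Icc 1 (n - 1), ∀ j' ∈ Finset.Icc 1 k,
        s i j = s i' j' → i = i' ∧ j = j')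
    (hxs : ∀ l ∈ Finset.Icc 1 n, ∀ i ∈ Finset.Icc 1 (n - 1), ∀ j ∈ Finset.Icc 1 k,
      x l ≠ s i j)
    (hxy : ∀ i ∈ Finset.Icc 1 n, x i ≠ y)
    (hsy : ∀ i ∈ Finset.Icc 1 (n - 1), ∀ j ∈ Finset.Icc 1 k, s i j ≠ y)
    (T : Finset ℕ) (hT : T ⊆ Finset.Icc 1 n) (hTcard : T.card = k + 1) :
    (∀ l : Lit V, ({l} : Clause V) ∉
        restrict (seqAMKAllY n k x s y) (T.image fun i => ((x i, true) : Lit V))) ∧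
    (∀ l : Lit V, ¬ UPDerives
        (restrict (seqAMKAllY n k x s y) (T.image fun i => ((x i, true) : Lit V))) l) := by
  set ρ : Finset (Lit V) := T.image fun i => ((x i, true) : Lit V) with hρdef
  have hρmem : ∀ l ∈ ρ, ∃ i, i ∈ T ∧ l = (x i, true) := by
    intro l hl
    simp only [hρdef, Finset.mem_image] at hl
    obtain ⟨i, hi, h⟩ := hl
    exact ⟨i, hi, h.symm⟩
  have hfalse : ∀ v : V, ((v, false) : Lit V) ∉ ρ := by
    intro v hv
    obtain ⟨i, _, h⟩ := hρmem _ hv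
    simp at h
  have hytrue : ((y, true) : Lit V) ∉ ρ := by
    intro hv
    obtain ⟨i, hi, h⟩ := hρmem _ hv
    simp only [Prod.mk.injEq] at h
    exact hxy i (hT hi) h.1.symm
  have hstrue : ∀ a ∈ Finset.Icc 1 (n-1), ∀ b ∈ Finset.Icc 1 k,
      ((s a b, true) : Lit V) ∉ ρ := by
    intro a ha b hb hv
    obtain ⟨i, hi, h⟩ := hρmem _ hv
    simp only [Prod.mk.injEq] at h
    exact hxs i (hT hi) a ha b hb h.1.symm
  have two_mem : ∀ (c : Clause V) (a b : Lit V), a ∈ c → b ∈ c → a ≠ b → 2 ≤ c.card := by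
    intro c a b ha hb hab
    calc 2 = ({a, b} : Finset (Lit V)).card := (Finset.card_pair hab).symm
      _ ≤ c.card := Finset.card_le_card (by
          intro l hl
          simp only [Finset.mem_insert, Finset.mem_singleton] at hl
          rcases hl with rfl | rfl <;> assumption)
  have key : ∀ c ∈ restrict (seqAMKAllY n k x s y) ρ, 2 ≤ c.card := by
    intro c hc
    simp only [restrict, Finset.mem_image, Finset.mem_filter] at hc
    obtain ⟨d, ⟨hd, -⟩, rfl⟩ := hc
    simp only [seqAMKAllY, Finset.mem_insert, Finset.mem_union, Finset.mem_image,
      Finset.mem_biUnion, Finset.mem_Ioo, Finset.mem_Ioc, Finset.mem_product,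
      Finset.mem_singleton] at hd
    rcases hd with rfl | (((⟨j, hj, rfl⟩ | ⟨i, hi, rfl | rfl⟩) |
        ⟨⟨a, b⟩, ⟨ha, hb⟩, rfl | rfl⟩) | ⟨i, hi, rfl⟩)
    · refine two_mem _ ((y, false)) ((s 1 1, true)) ?_ ?_ (by simp)
      · exact Finset.mem_filter.mpr ⟨by simp, by simpa using hytrue⟩
      · exact Finset.mem_filter.mpr ⟨by simp, by simpa using hfalse _⟩
    · refine two_mem _ ((y, false)) ((s 1 j, false)) ?_ ?_ ?_
      · exact Finset.mem_filter.mpr ⟨by simp, by simpa using hytrue⟩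
      · refine Finset.mem_filter.mpr ⟨by simp, ?_⟩
        simpa using hstrue 1 (by simp [Finset.mem_Icc]; omega) j
          (by simp [Finset.mem_Icc]; omega)
      · simp only [ne_eq, Prod.mk.injEq, not_and]
        intro h
        exact absurd h.symm (hsy 1 (by simp [Finset.mem_Icc]; omega) j
          (by simp [Finset.mem_Icc]; omega))
    · refine two_mem _ ((y, false)) ((s i 1, true)) ?_ ?_ (by simp)
      · exact Finset.mem_filter.mpr ⟨by simp, by simpa using hytrue⟩
      · exact Finset.mem_filter.mpr ⟨by simp, by simpa using hfalse _⟩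
    · refine two_mem _ ((y, false)) ((s i 1, true)) ?_ ?_ (by simp)
      · exact Finset.mem_filter.mpr ⟨by simp, by simpa using hytrue⟩
      · exact Finset.mem_filter.mpr ⟨by simp, by simpa using hfalse _⟩
    · refine two_mem _ ((y, false)) ((s a b, true)) ?_ ?_ (by simp)
      · exact Finset.mem_filter.mpr ⟨by simp, by simpa using hytrue⟩
      · exact Finset.mem_filter.mpr ⟨by simp, by simpa using hfalse _⟩
    · refine two_mem _ ((y, false)) ((s a b, true)) ?_ ?_ (by simp)
      · exact Finset.mem_filter.mpr ⟨by simp, by simpa using hytrue⟩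
      · exact Finset.mem_filter.mpr ⟨by simp, by simpa using hfalse _⟩
    · refine two_mem _ ((y, false)) ((s (i - 1) k, false)) ?_ ?_ ?_
      · exact Finset.mem_filter.mpr ⟨by simp, by simpa using hytrue⟩
      · refine Finset.mem_filter.mpr ⟨by simp, ?_⟩
        simpa using hstrue (i - 1) (by simp [Finset.mem_Icc]; omega) k
          (by simp [Finset.mem_Icc]; omega)
      · simp only [ne_eq, Prod.mk.injEq, not_and]
        intro h
        exact absurd h.symm (hsy (i - 1) (by simp [Finset.mem_Icc]; omega) k
          (by simp [Finset.mem_Icc]; omega))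
  constructor
  · intro l hl
    have := key _ hl
    simp at this
  · intro l h
    cases h with
    | unit h => have := key _ h; simp at this
    | bot h => have := key _ h; simp at this
    | step m hm _ => have := key _ hm; simp at this
end

section
/- Let Φ be the conditional two-comparator formula consisting of the three clauses (¬y ∨ ¬x_1 ∨ z_1), (¬y ∨ ¬x_2 ∨ z_1), (¬y ∨ ¬x_1 ∨ ¬x_2 ∨ z_2), where y, x_1, x_2, z_1, z_2 are pairwise distinct variables. Then assigning exactly one of the input variables x_1 or x_2 to true (with all other variables unassigned) produces a restricted formula containing no unit clause, so unit propagation derives no literal from it. -/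
variable {V : Type} [DecidableEq V]

/-!
Every clause of the two-comparator formula contains `¬y` and a positive literal. Setting an
input `xᵢ` true falsifies neither of them, so every clause of the restricted formula still has
two distinct literals: there is no unit and no empty clause, and unit propagation never starts.
-/

theorem UPDerives.not_of_one_lt_card {Φ : CnfForm V} (hΦ : ∀ c ∈ Φ, 1 < c.card) (l : Lit V) :
    ¬ UPDerives Φ l := by
  rintro (⟨hunit⟩ | ⟨hempty⟩ | ⟨m, hunit, -⟩)
  · simpa using hΦ _ hunit
  · simpa using hΦ _ hempty
  · simpa using hΦ _ hunit

theorem exists_of_mem_restrict {Φ : CnfForm V} {ρ : Finset (Lit V)} {c : Clause V}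
    (hc : c ∈ restrict Φ ρ) : ∃ d ∈ Φ, ∀ l ∈ d, (l.1, !l.2) ∉ ρ → l ∈ c := by
  obtain ⟨d, hd, rfl⟩ := Finset.mem_image.mp hc
  exact ⟨d, (Finset.mem_filter.mp hd).1, fun l hl hlρ => Finset.mem_filter.mpr ⟨hl, hlρ⟩⟩

theorem one_lt_card_of_mem_restrict {Φ : CnfForm V} {ρ : Finset (Lit V)} {y : V}
    (hΦ : ∀ d ∈ Φ, (y, false) ∈ d ∧ ∃ w, (w, true) ∈ d)
    (hρ : ∀ l ∈ ρ, l.2 = true) (hy : (y, true) ∉ ρ) : ∀ c ∈ restrict Φ ρ, 1 < c.card := by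
  intro c hc
  obtain ⟨d, hd, hdc⟩ := exists_of_mem_restrict hc
  obtain ⟨hyd, w, hwd⟩ := hΦ d hd
  have hyc : (y, false) ∈ c := hdc _ hyd hy
  have hwc : (w, true) ∈ c := hdc _ hwd fun hw => by simpa using hρ _ hw
  exact Finset.one_lt_card.mpr ⟨_, hyc, _, hwc, by simp⟩

def twoComparator (y x₁ x₂ z₁ z₂ : V) : CnfForm V :=
  {{(y, false), (x₁, false), (z₁, true)},
   {(y, false), (x₂, false), (z₁, true)},
   {(y, false), (x₁, false), (x₂, false), (z₂, true)}}

theorem forall_mem_twoComparator {y x₁ x₂ z₁ z₂ : V} :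
    ∀ d ∈ twoComparator y x₁ x₂ z₁ z₂, (y, false) ∈ d ∧ ∃ w, (w, true) ∈ d := by
  simp only [twoComparator, Finset.mem_insert, Finset.mem_singleton]
  rintro d (rfl | rfl | rfl)
  · exact ⟨by simp, z₁, by simp⟩
  · exact ⟨by simp, z₁, by simp⟩
  · exact ⟨by simp, z₂, by simp⟩

/-- For the conditional two-comparator formula consisting of the
clauses `(¬y ∨ ¬x_1 ∨ z_1)`, `(¬y ∨ ¬x_2 ∨ z_1)`, `(¬y ∨ ¬x_1 ∨ ¬x_2 ∨ z_2)`,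
assigning exactly one of the inputs `x_1` or `x_2` to true (all other variables
unassigned) yields a restricted formula with no unit clause, so unit propagation
derives no literal from it. -/
theorem stmt18 {V : Type} [DecidableEq V] (y x₁ x₂ z₁ z₂ : V)
    (hdist : ([y, x₁, x₂, z₁, z₂] : List V).Pairwise (· ≠ ·)) :
    ∀ u : V, (u = x₁ ∨ u = x₂) →
      (∀ l : Lit V, ({l} : Clause V) ∉
          restrict ({({(y, false), (x₁, false), (z₁, true)} : Clause V),
                     ({(y, false), (x₂, false), (z₁, true)} : Clause V),
                     ({(y, false), (x₁, false), (x₂, false), (z₂, true)} : Clause V)} : CnfForm V)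
            ({((u, true) : Lit V)} : Finset (Lit V))) ∧
      (∀ l : Lit V, ¬ UPDerives
          (restrict ({({(y, false), (x₁, false), (z₁, true)} : Clause V),
                      ({(y, false), (x₂, false), (z₁, true)} : Clause V),
                      ({(y, false), (x₁, false), (x₂, false), (z₂, true)} : Clause V)} : CnfForm V)
            ({((u, true) : Lit V)} : Finset (Lit V))) l) := by
  intro u hu
  have hyu : y ≠ u := by
    simp only [List.pairwise_cons, List.mem_cons] at hdist
    rcases hu with rfl | rfl <;> simp_all
  have hcard := one_lt_card_of_mem_restrict (Φ := twoComparator y x₁ x₂ z₁ z₂)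
    (ρ := {(u, true)}) forall_mem_twoComparator (by simp) (by simpa using hyu)
  exact ⟨fun l hl => by simpa using hcard _ hl, UPDerives.not_of_one_lt_card hcard⟩
end
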